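/- Let ρ be a convenient relation on a finite set A. Then the ternary relation O_ρ on A is a cyclic order on A, i.e., it is asymmetric, transitive, and cyclic. -/

import Mathlib

/-- A ternary relation `O` is a cyclic order if it is asymmetric, transitive and cyclic. -/
def IsCyclicOrder {A : Type*} (O : A → A → A → Prop) : Prop :=
  (∀ x y z, O x y z → ¬ O z y x) ∧
  (∀ x y z u, O x y z → O x z u → O x y u) ∧
  (∀ x y z, O x y z → O y z x)

/-- A cyclic order is complete if any three pairwise distinct elements admit a
permutation that is cyclically ordered. -/
def IsCompleteCyclicOrder {A : Type*} (O : A → A → A → Prop) : Prop :=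
  IsCyclicOrder O ∧
  ∀ x y z : A, x ≠ y → y ≠ z → x ≠ z →
    (O x y z ∨ O x z y ∨ O y x z ∨ O y z x ∨ O z x y ∨ O z y x)

/-- A binary relation `ρ` on `A` is convenient if it is irreflexive and every element
has at most one successor and at most one predecessor. -/
def Convenient {A : Type*} (ρ : A → A → Prop) : Prop :=
  (∀ a b, ρ a b → a ≠ b) ∧
  (∀ a b c, ρ a b → ρ a c → b = c) ∧
  (∀ a b c, ρ b a → ρ c a → b = c)

/-- The ternary relation induced by a convenient relation `ρ`: `(a₁, a₂, a₃) ∈ O_ρ` iff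
`a₁, a₂, a₃` are pairwise distinct and there is a cyclic sequence
`a₁ = x₀, …, x_{m₁} = a₂ = y₀, …, y_{m₂} = a₃ = z₀, …, z_{m₃} = a₁` whose consecutive
members are `ρ`-related and whose intermediate members avoid `{a₁, a₂, a₃}`. -/
def Orho {A : Type*} (ρ : A → A → Prop) (a₁ a₂ a₃ : A) : Prop :=
  a₁ ≠ a₂ ∧ a₂ ≠ a₃ ∧ a₃ ≠ a₁ ∧
  ∃ (m₁ m₂ m₃ : ℕ) (x : Fin (m₁ + 1) → A) (y : Fin (m₂ + 1) → A) (z : Fin (m₃ + 1) → A),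
    x 0 = a₁ ∧ x (Fin.last m₁) = a₂ ∧
    y 0 = a₂ ∧ y (Fin.last m₂) = a₃ ∧
    z 0 = a₃ ∧ z (Fin.last m₃) = a₁ ∧
    (∀ i : Fin m₁, ρ (x i.castSucc) (x i.succ)) ∧
    (∀ i : Fin m₂, ρ (y i.castSucc) (y i.succ)) ∧
    (∀ i : Fin m₃, ρ (z i.castSucc) (z i.succ)) ∧
    (∀ i : Fin (m₁ + 1), i ≠ 0 → i ≠ Fin.last m₁ → x i ≠ a₁ ∧ x i ≠ a₂ ∧ x i ≠ a₃) ∧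
    (∀ i : Fin (m₂ + 1), i ≠ 0 → i ≠ Fin.last m₂ → y i ≠ a₁ ∧ y i ≠ a₂ ∧ y i ≠ a₃) ∧
    (∀ i : Fin (m₃ + 1), i ≠ 0 → i ≠ Fin.last m₃ → z i ≠ a₁ ∧ z i ≠ a₂ ∧ z i ≠ a₃)

/-!
Since every element has at most one `ρ`-successor, two `ρ`-walks from the same point agree as
long as both are defined. Gluing the three paths that witness `O_ρ(a, b, c)` gives the walk from
`a` up to its first return to `a`, on which `b` and `c` each occur exactly once, `b` first;
conversely, such a return cycle splits at `b` and `c` into three such paths. As the return cycle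
of `a` is unique, asymmetry and transitivity reduce to comparing positions on it, and cyclicity
is a rotation of the three paths.
-/

section

variable {A : Type*} {ρ : A → A → Prop}

theorem Convenient.rightUnique (hρ : Convenient ρ) : Relator.RightUnique ρ :=
  fun a _ _ => hρ.2.1 a _ _

def IsWalk (ρ : A → A → Prop) (w : ℕ → A) (n : ℕ) : Prop :=
  ∀ k < n, ρ (w k) (w (k + 1))

theorem IsWalk.eq_of_le (hρ : Relator.RightUnique ρ) {v w : ℕ → A} {m n : ℕ}
    (hv : IsWalk ρ v m) (hw : IsWalk ρ w n) (h0 : v 0 = w 0) :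
    ∀ k ≤ m, k ≤ n → v k = w k := by
  intro k
  induction k with
  | zero => exact fun _ _ => h0
  | succ k ih =>
    intro hm hn
    exact hρ (hv k hm) (ih (by omega) (by omega) ▸ hw k hn)

def concatAt (u : ℕ → A) (l : ℕ) (v : ℕ → A) (k : ℕ) : A :=
  if k ≤ l then u k else v (k - l)

theorem concatAt_of_le {u v : ℕ → A} {l k : ℕ} (h : k ≤ l) : concatAt u l v k = u k :=
  if_pos h

theorem concatAt_add {u v : ℕ → A} {l : ℕ} (h : u l = v 0) (k : ℕ) :
    concatAt u l v (l + k) = v k := by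
  unfold concatAt
  split_ifs with hk
  · obtain rfl : k = 0 := by omega
    exact h
  · simp

theorem IsWalk.concatAt {u v : ℕ → A} {l m : ℕ} (hu : IsWalk ρ u l) (hv : IsWalk ρ v m)
    (h : u l = v 0) : IsWalk ρ (concatAt u l v) (l + m) := by
  intro k hk
  rcases lt_or_ge k l with hkl | hkl
  · rw [concatAt_of_le hkl.le, concatAt_of_le hkl]
    exact hu k hkl
  · obtain ⟨t, rfl⟩ := Nat.exists_eq_add_of_le hkl
    rw [Nat.add_assoc, concatAt_add h, concatAt_add h]
    exact hv t (by omega)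

structure IsSegment (ρ : A → A → Prop) (P : A → Prop) (w : ℕ → A) (n : ℕ) (a b : A) : Prop where
  start : w 0 = a
  finish : w n = b
  step : IsWalk ρ w n
  interior : ∀ k, 0 < k → k < n → P (w k)

theorem exists_isSegment_iff_fin {P : A → Prop} {n : ℕ} {a b : A} :
    (∃ w, IsSegment ρ P w n a b) ↔
      ∃ x : Fin (n + 1) → A, x 0 = a ∧ x (Fin.last n) = b ∧
        (∀ i : Fin n, ρ (x i.castSucc) (x i.succ)) ∧
        ∀ i : Fin (n + 1), i ≠ 0 → i ≠ Fin.last n → P (x i) := by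
  constructor
  · rintro ⟨w, hw⟩
    exact ⟨fun i => w i, hw.start, hw.finish, fun i => hw.step i i.isLt,
      fun i h0 hl => hw.interior i (Fin.pos_iff_ne_zero.2 h0) (Fin.val_lt_last hl)⟩
  · rintro ⟨x, h0, hl, hstep, hint⟩
    let w : ℕ → A := fun k => if h : k ≤ n then x ⟨k, Nat.lt_succ_of_le h⟩ else b
    have hw (i : Fin (n + 1)) : w i = x i := dif_pos (Nat.le_of_lt_succ i.isLt)
    refine ⟨w, ⟨hw 0 ▸ h0, hw (Fin.last n) ▸ hl, fun k hk => ?_, fun k hk0 hkn => ?_⟩⟩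
    · simpa only [← hw, Fin.val_castSucc, Fin.val_succ] using hstep ⟨k, hk⟩
    · simpa only [← hw] using
        hint ⟨k, by omega⟩ (Fin.ne_of_val_ne hk0.ne') (Fin.ne_of_val_ne hkn.ne)

theorem orho_iff_segments {a b c : A} :
    Orho ρ a b c ↔ a ≠ b ∧ b ≠ c ∧ c ≠ a ∧
      ∃ (l m n : ℕ) (u v w : ℕ → A),
        IsSegment ρ (fun d => d ≠ a ∧ d ≠ b ∧ d ≠ c) u l a b ∧
        IsSegment ρ (fun d => d ≠ a ∧ d ≠ b ∧ d ≠ c) v m b c ∧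
        IsSegment ρ (fun d => d ≠ a ∧ d ≠ b ∧ d ≠ c) w n c a := by
  have seg {n : ℕ} {s t : A} := exists_isSegment_iff_fin (ρ := ρ)
    (P := fun d => d ≠ a ∧ d ≠ b ∧ d ≠ c) (n := n) (a := s) (b := t)
  constructor
  · rintro ⟨hab, hbc, hca, l, m, n, x, y, z, hx0, hxl, hy0, hyl, hz0, hzl, hx, hy, hz,
      hxi, hyi, hzi⟩
    obtain ⟨u, hu⟩ := seg.2 ⟨x, hx0, hxl, hx, hxi⟩
    obtain ⟨v, hv⟩ := seg.2 ⟨y, hy0, hyl, hy, hyi⟩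
    obtain ⟨w, hw⟩ := seg.2 ⟨z, hz0, hzl, hz, hzi⟩
    exact ⟨hab, hbc, hca, l, m, n, u, v, w, hu, hv, hw⟩
  · rintro ⟨hab, hbc, hca, l, m, n, u, v, w, hu, hv, hw⟩
    obtain ⟨x, hx0, hxl, hx, hxi⟩ := seg.1 ⟨u, hu⟩
    obtain ⟨y, hy0, hyl, hy, hyi⟩ := seg.1 ⟨v, hv⟩
    obtain ⟨z, hz0, hzl, hz, hzi⟩ := seg.1 ⟨w, hw⟩
    exact ⟨hab, hbc, hca, l, m, n, x, y, z, hx0, hxl, hy0, hyl, hz0, hzl, hx, hy, hz,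
      hxi, hyi, hzi⟩

theorem Orho.rotate {a b c : A} (h : Orho ρ a b c) : Orho ρ b c a := by
  obtain ⟨hab, hbc, hca, l, m, n, u, v, w, hu, hv, hw⟩ := orho_iff_segments.1 h
  have hP (d : A) : (d ≠ a ∧ d ≠ b ∧ d ≠ c) → d ≠ b ∧ d ≠ c ∧ d ≠ a := by tauto
  exact orho_iff_segments.2 ⟨hbc, hca, hab, m, n, l, v, w, u,
    { hv with interior := fun k hk hkn => hP _ (hv.interior k hk hkn) },
    { hw with interior := fun k hk hkn => hP _ (hw.interior k hk hkn) },
    { hu with interior := fun k hk hkn => hP _ (hu.interior k hk hkn) }⟩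

structure IsReturnCycle (ρ : A → A → Prop) (w : ℕ → A) (N : ℕ) : Prop where
  pos : 0 < N
  step : IsWalk ρ w N
  ret : w N = w 0
  first : ∀ k, 0 < k → k < N → w k ≠ w 0

theorem IsReturnCycle.eq (hρ : Relator.RightUnique ρ) {v w : ℕ → A} {m n : ℕ}
    (hv : IsReturnCycle ρ v m) (hw : IsReturnCycle ρ w n) (h0 : v 0 = w 0) :
    m = n ∧ ∀ k ≤ m, v k = w k := by
  have hagree := hv.step.eq_of_le hρ hw.step h0
  have hmn : m = n := by
    rcases lt_trichotomy m n with h | h | h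
    · exact absurd (by rw [← hagree m le_rfl h.le, hv.ret, h0]) (hw.first m hv.pos h)
    · exact h
    · exact absurd (by rw [hagree n h.le le_rfl, hw.ret, h0]) (hv.first n hw.pos h)
  exact ⟨hmn, fun k hk => hagree k hk (hmn ▸ hk)⟩

def OccursOnceAt (w : ℕ → A) (N : ℕ) (b : A) (i : ℕ) : Prop :=
  0 < i ∧ i < N ∧ w i = b ∧ ∀ k, 0 < k → k < N → w k = b → k = i

theorem OccursOnceAt.congr {v w : ℕ → A} {N i : ℕ} {b : A} (h : ∀ k ≤ N, v k = w k)
    (hv : OccursOnceAt v N b i) : OccursOnceAt w N b i :=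
  ⟨hv.1, hv.2.1, (h i hv.2.1.le).symm.trans hv.2.2.1,
    fun k hk hkN hkb => hv.2.2.2 k hk hkN ((h k hkN.le).trans hkb)⟩

theorem OccursOnceAt.unique {w : ℕ → A} {N i j : ℕ} {b : A} (hi : OccursOnceAt w N b i)
    (hj : OccursOnceAt w N b j) : i = j :=
  hj.2.2.2 i hi.1 hi.2.1 hi.2.2.1

def OrbitOrder (ρ : A → A → Prop) (a b c : A) : Prop :=
  ∃ N w, IsReturnCycle ρ w N ∧ w 0 = a ∧
    ∃ i j, OccursOnceAt w N b i ∧ OccursOnceAt w N c j ∧ i < j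

theorem OrbitOrder.positions (hρ : Relator.RightUnique ρ) {w : ℕ → A} {N : ℕ} {b c : A}
    (hw : IsReturnCycle ρ w N) (h : OrbitOrder ρ (w 0) b c) :
    ∃ i j, OccursOnceAt w N b i ∧ OccursOnceAt w N c j ∧ i < j := by
  obtain ⟨N', w', hw', h0, i, j, hb, hc, hij⟩ := h
  obtain ⟨rfl, hagree⟩ := hw'.eq hρ hw h0
  exact ⟨i, j, hb.congr hagree, hc.congr hagree, hij⟩

theorem OrbitOrder.not_swap (hρ : Relator.RightUnique ρ) {a b c : A} (h : OrbitOrder ρ a b c) :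
    ¬ OrbitOrder ρ a c b := by
  obtain ⟨N, w, hw, rfl, i, j, hb, hc, hij⟩ := h
  intro h'
  obtain ⟨j', i', hc', hb', hji⟩ := h'.positions hρ hw
  have := hb.unique hb'
  have := hc.unique hc'
  omega

theorem OrbitOrder.trans (hρ : Relator.RightUnique ρ) {a b c d : A} (h₁ : OrbitOrder ρ a b c)
    (h₂ : OrbitOrder ρ a c d) : OrbitOrder ρ a b d := by
  obtain ⟨N, w, hw, rfl, i, j, hb, hc, hij⟩ := h₁
  obtain ⟨j', k, hc', hd, hjk⟩ := h₂.positions hρ hw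
  have := hc.unique hc'
  exact ⟨N, w, hw, rfl, i, k, hb, hd, by omega⟩

theorem orbitOrder_of_walk {s : ℕ → A} {N i j : ℕ} {a b c : A} (hab : a ≠ b) (hbc : b ≠ c)
    (hca : c ≠ a) (hs : IsWalk ρ s N) (hs0 : s 0 = a) (hsN : s N = a) (hi : 0 < i) (hij : i < j)
    (hjN : j < N) (hsi : s i = b) (hsj : s j = c)
    (hinterior : ∀ k, 0 < k → k < N → k ≠ i → k ≠ j → s k ≠ a ∧ s k ≠ b ∧ s k ≠ c) :
    OrbitOrder ρ a b c := by
  refine ⟨N, s, ⟨by omega, hs, hsN.trans hs0.symm, fun k hk hkN => ?_⟩, hs0, i, j,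
    ⟨hi, by omega, hsi, fun k hk hkN hkb => ?_⟩, ⟨by omega, hjN, hsj, fun k hk hkN hkc => ?_⟩, hij⟩
  · rw [hs0]
    by_cases hki : k = i
    · rw [hki, hsi]; exact hab.symm
    by_cases hkj : k = j
    · rw [hkj, hsj]; exact hca
    exact (hinterior k hk hkN hki hkj).1
  · by_contra hki
    by_cases hkj : k = j
    · rw [hkj, hsj] at hkb
      exact hbc hkb.symm
    exact (hinterior k hk hkN hki hkj).2.1 hkb
  · by_contra hkj
    by_cases hki : k = i
    · rw [hki, hsi] at hkc
      exact hbc hkc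
    exact (hinterior k hk hkN hki hkj).2.2 hkc

theorem orbitOrder_of_segments {a b c : A} (hab : a ≠ b) (hbc : b ≠ c) (hca : c ≠ a)
    {l m n : ℕ} {u v w : ℕ → A}
    (hu : IsSegment ρ (fun d => d ≠ a ∧ d ≠ b ∧ d ≠ c) u l a b)
    (hv : IsSegment ρ (fun d => d ≠ a ∧ d ≠ b ∧ d ≠ c) v m b c)
    (hw : IsSegment ρ (fun d => d ≠ a ∧ d ≠ b ∧ d ≠ c) w n c a) :
    OrbitOrder ρ a b c := by
  have hl : 0 < l := Nat.pos_of_ne_zero fun h => hab (hu.start.symm.trans (h ▸ hu.finish))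
  have hm : 0 < m := Nat.pos_of_ne_zero fun h => hbc (hv.start.symm.trans (h ▸ hv.finish))
  have hn : 0 < n := Nat.pos_of_ne_zero fun h => hca (hw.start.symm.trans (h ▸ hw.finish))
  have huv : u l = v 0 := hu.finish.trans hv.start.symm
  have huvw : concatAt u l v (l + m) = w 0 := by rw [concatAt_add huv, hv.finish, hw.start]
  set s := concatAt (concatAt u l v) (l + m) w
  have hs_left (k : ℕ) (hk : k ≤ l) : s k = u k :=
    (concatAt_of_le (by omega)).trans (concatAt_of_le hk)
  have hs_mid (t : ℕ) (ht : t ≤ m) : s (l + t) = v t :=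
    (concatAt_of_le (by omega)).trans (concatAt_add huv t)
  have hs_right (t : ℕ) : s (l + m + t) = w t := concatAt_add huvw t
  have hinterior (k : ℕ) (hk : 0 < k) (hkN : k < l + m + n) (hkl : k ≠ l) (hklm : k ≠ l + m) :
      s k ≠ a ∧ s k ≠ b ∧ s k ≠ c := by
    rcases lt_or_gt_of_ne hkl with h | h
    · rw [hs_left k h.le]
      exact hu.interior k hk h
    obtain ⟨t, rfl⟩ := Nat.exists_eq_add_of_le h.le
    rcases lt_or_gt_of_ne hklm with h' | h'
    · rw [hs_mid t (by omega)]
      exact hv.interior t (by omega) (by omega)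
    · obtain ⟨r, hr⟩ := Nat.exists_eq_add_of_le h'.le
      rw [hr, hs_right r]
      exact hw.interior r (by omega) (by omega)
  exact orbitOrder_of_walk hab hbc hca ((hu.step.concatAt hv.step huv).concatAt hw.step huvw)
    ((hs_left 0 (Nat.zero_le l)).trans hu.start) ((hs_right n).trans hw.finish) hl
    (by omega) (by omega) ((hs_left l le_rfl).trans hu.finish)
    ((hs_mid m le_rfl).trans hv.finish) hinterior

theorem OrbitOrder.orho {a b c : A} (h : OrbitOrder ρ a b c) : Orho ρ a b c := by
  obtain ⟨N, s, hs, rfl, i, j, ⟨hi, hiN, hsi, hb⟩, ⟨hj, hjN, hsj, hc⟩, hij⟩ := h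
  have hinterior (k : ℕ) (hk : 0 < k) (hkN : k < N) (hki : k ≠ i) (hkj : k ≠ j) :
      s k ≠ s 0 ∧ s k ≠ b ∧ s k ≠ c :=
    ⟨hs.first k hk hkN, fun h => hki (hb k hk hkN h), fun h => hkj (hc k hk hkN h)⟩
  refine orho_iff_segments.2 ⟨hsi ▸ (hs.first i hi hiN).symm, fun h => ?_,
    hsj ▸ hs.first j hj hjN, i, j - i, N - j, s, fun t => s (i + t), fun t => s (j + t),
    ⟨rfl, hsi, fun k hk => hs.step k (by omega),
      fun k hk hki => hinterior k hk (by omega) (by omega) (by omega)⟩,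
    ⟨hsi, by rw [Nat.add_sub_cancel' hij.le, hsj], fun t ht => hs.step (i + t) (by omega),
      fun t ht htm => hinterior (i + t) (by omega) (by omega) (by omega) (by omega)⟩,
    ⟨hsj, by rw [Nat.add_sub_cancel' hjN.le, hs.ret], fun t ht => hs.step (j + t) (by omega),
      fun t ht htn => hinterior (j + t) (by omega) (by omega) (by omega) (by omega)⟩⟩
  have := hb j hj hjN (hsj.trans h.symm)
  omega

theorem orho_iff_orbitOrder {a b c : A} : Orho ρ a b c ↔ OrbitOrder ρ a b c := by
  refine ⟨fun h => ?_, OrbitOrder.orho⟩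
  obtain ⟨hab, hbc, hca, l, m, n, u, v, w, hu, hv, hw⟩ := orho_iff_segments.1 h
  exact orbitOrder_of_segments hab hbc hca hu hv hw

end

theorem Orho_isCyclicOrder_general {A : Type*}
    (ρ : A → A → Prop) (hρ : Convenient ρ) :
    IsCyclicOrder (Orho ρ) := by
  have hρ' := hρ.rightUnique
  refine ⟨fun x y z h₁ h₂ => ?_, fun x y z u h₁ h₂ => ?_, fun x y z => Orho.rotate⟩
  · exact (orho_iff_orbitOrder.1 h₁).not_swap hρ' (orho_iff_orbitOrder.1 h₂.rotate.rotate)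
  · exact orho_iff_orbitOrder.2
      ((orho_iff_orbitOrder.1 h₁).trans hρ' (orho_iff_orbitOrder.1 h₂))

/-- The ternary relation induced by a convenient relation on a finite set is a cyclic
order. -/
theorem Orho_isCyclicOrder {A : Type*} [Fintype A]
    (ρ : A → A → Prop) (hρ : Convenient ρ) :
    IsCyclicOrder (Orho ρ) :=
  Orho_isCyclicOrder_general ρ hρ
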